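/- Let x, v, q : ℝ × ℝ → ℝ be C^∞ functions of (T,Y) satisfying for all (T,Y) the relation ∂_Y x = q·cos⁴(v/2). If at a point (T₀,Y₀) one has v(T₀,Y₀) = π, then ∂_Y^k x(T₀,Y₀) = 0 for every k = 1, 2, 3, 4, and ∂_Y⁵x(T₀,Y₀) = (3/2)·q(T₀,Y₀)·(∂_Y v(T₀,Y₀))⁴; in particular, if q(T₀,Y₀) ≠ 0 and ∂_Y v(T₀,Y₀) ≠ 0 then ∂_Y⁵x(T₀,Y₀) ≠ 0. If moreover ∂_T v(T₀,Y₀) = 0, then also ∂_T∂_Y^k x(T₀,Y₀) = 0 for every k = 1, 2, 3, 4. -/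

import Mathlib

open Real

/-- Partial derivative in the first variable `T`. -/
noncomputable def pT (f : ℝ × ℝ → ℝ) (p : ℝ × ℝ) : ℝ :=
  deriv (fun s => f (s, p.2)) p.1

/-- Partial derivative in the second variable `Y`. -/
noncomputable def pY (f : ℝ × ℝ → ℝ) (p : ℝ × ℝ) : ℝ :=
  deriv (fun y => f (p.1, y)) p.2

lemma hasDerivAt_sliceY (f : ℝ × ℝ → ℝ) (hf : Differentiable ℝ f) (p : ℝ × ℝ) :
    HasDerivAt (fun y => f (p.1, y)) (pY f p) p.2 := by
  have h1 : HasDerivAt (fun y : ℝ => ((p.1 : ℝ), y)) ((0 : ℝ), (1 : ℝ)) p.2 :=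
    (hasDerivAt_const _ _).prodMk (hasDerivAt_id _)
  have h2 := (hf (p.1, p.2)).hasFDerivAt.comp_hasDerivAt p.2 h1
  have h3 : pY f p = fderiv ℝ f (p.1, p.2) ((0 : ℝ), (1 : ℝ)) := h2.deriv
  rw [h3]; exact h2

lemma hasDerivAt_sliceT (f : ℝ × ℝ → ℝ) (hf : Differentiable ℝ f) (p : ℝ × ℝ) :
    HasDerivAt (fun t => f (t, p.2)) (pT f p) p.1 := by
  have h1 : HasDerivAt (fun t : ℝ => ((t : ℝ), p.2)) ((1 : ℝ), (0 : ℝ)) p.1 :=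
    (hasDerivAt_id _).prodMk (hasDerivAt_const _ _)
  have h2 := (hf (p.1, p.2)).hasFDerivAt.comp_hasDerivAt p.1 h1
  have h3 : pT f p = fderiv ℝ f (p.1, p.2) ((1 : ℝ), (0 : ℝ)) := h2.deriv
  rw [h3]; exact h2

lemma contDiff_pY (f : ℝ × ℝ → ℝ) (hf : ContDiff ℝ (⊤ : ℕ∞) f) : ContDiff ℝ (⊤ : ℕ∞) (pY f) := by
  have h : pY f = fun p => fderiv ℝ f p ((0 : ℝ), (1 : ℝ)) := by
    funext p
    exact ((hf.differentiable (by simp) (p.1, p.2)).hasFDerivAt.comp_hasDerivAt p.2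
      ((hasDerivAt_const _ _).prodMk (hasDerivAt_id _))).deriv
  rw [h]
  exact (hf.fderiv_right (by simp)).clm_apply contDiff_const

lemma stepY1 (W a0 a1 b0 b1 : ℝ × ℝ → ℝ)
    (hW : ∀ p, W p = a0 p * b0 p ^ 4)
    (ha0 : ∀ p, HasDerivAt (fun y => a0 (p.1, y)) (a1 p) p.2)
    (hb0 : ∀ p, HasDerivAt (fun y => b0 (p.1, y)) (b1 p) p.2) :
    ∀ p, pY W p = a1 p * b0 p ^ 4 + 4 * a0 p * b0 p ^ 3 * b1 p := by
  intro p
  have h := (ha0 p).mul ((hb0 p).pow 4)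
  have h' : HasDerivAt (fun y => W (p.1, y)) _ p.2 :=
    h.congr_of_eventuallyEq (Filter.Eventually.of_forall fun y => hW _)
  have hd : pY W p = _ := h'.deriv
  rw [hd]
  norm_num [Prod.mk.eta]
  ring

lemma stepY2 (W a0 a1 a2 b0 b1 b2 : ℝ × ℝ → ℝ)
    (hW : ∀ p, W p = a1 p * b0 p ^ 4 + 4 * a0 p * b0 p ^ 3 * b1 p)
    (ha0 : ∀ p, HasDerivAt (fun y => a0 (p.1, y)) (a1 p) p.2)
    (ha1 : ∀ p, HasDerivAt (fun y => a1 (p.1, y)) (a2 p) p.2)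
    (hb0 : ∀ p, HasDerivAt (fun y => b0 (p.1, y)) (b1 p) p.2)
    (hb1 : ∀ p, HasDerivAt (fun y => b1 (p.1, y)) (b2 p) p.2) :
    ∀ p, pY W p = a2 p * b0 p ^ 4 + 8 * a1 p * b0 p ^ 3 * b1 p
      + 12 * a0 p * b0 p ^ 2 * b1 p ^ 2 + 4 * a0 p * b0 p ^ 3 * b2 p := by
  intro p
  have h := ((ha1 p).mul ((hb0 p).pow 4)).add
    ((((ha0 p).const_mul (4 : ℝ)).mul ((hb0 p).pow 3)).mul (hb1 p))
  have h' : HasDerivAt (fun y => W (p.1, y)) _ p.2 :=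
    h.congr_of_eventuallyEq (Filter.Eventually.of_forall fun y => hW _)
  have hd : pY W p = _ := h'.deriv
  rw [hd]
  norm_num [Prod.mk.eta]
  ring

lemma stepY3 (W a0 a1 a2 a3 b0 b1 b2 b3 : ℝ × ℝ → ℝ)
    (hW : ∀ p, W p = a2 p * b0 p ^ 4 + 8 * a1 p * b0 p ^ 3 * b1 p
      + 12 * a0 p * b0 p ^ 2 * b1 p ^ 2 + 4 * a0 p * b0 p ^ 3 * b2 p)
    (ha0 : ∀ p, HasDerivAt (fun y => a0 (p.1, y)) (a1 p) p.2)
    (ha1 : ∀ p, HasDerivAt (fun y => a1 (p.1, y)) (a2 p) p.2)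
    (ha2 : ∀ p, HasDerivAt (fun y => a2 (p.1, y)) (a3 p) p.2)
    (hb0 : ∀ p, HasDerivAt (fun y => b0 (p.1, y)) (b1 p) p.2)
    (hb1 : ∀ p, HasDerivAt (fun y => b1 (p.1, y)) (b2 p) p.2)
    (hb2 : ∀ p, HasDerivAt (fun y => b2 (p.1, y)) (b3 p) p.2) :
    ∀ p, pY W p = a3 p * b0 p ^ 4 + 12 * a2 p * b0 p ^ 3 * b1 p
      + 36 * a1 p * b0 p ^ 2 * b1 p ^ 2 + 12 * a1 p * b0 p ^ 3 * b2 p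
      + 24 * a0 p * b0 p * b1 p ^ 3 + 36 * a0 p * b0 p ^ 2 * b1 p * b2 p
      + 4 * a0 p * b0 p ^ 3 * b3 p := by
  intro p
  have h := ((((ha2 p).mul ((hb0 p).pow 4)).add
      ((((ha1 p).const_mul (8 : ℝ)).mul ((hb0 p).pow 3)).mul (hb1 p))).add
      ((((ha0 p).const_mul (12 : ℝ)).mul ((hb0 p).pow 2)).mul ((hb1 p).pow 2))).add
      ((((ha0 p).const_mul (4 : ℝ)).mul ((hb0 p).pow 3)).mul (hb2 p))
  have h' : HasDerivAt (fun y => W (p.1, y)) _ p.2 :=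
    h.congr_of_eventuallyEq (Filter.Eventually.of_forall fun y => hW _)
  have hd : pY W p = _ := h'.deriv
  rw [hd]
  norm_num [Prod.mk.eta]
  ring

lemma stepY4at (W a0 a1 a2 a3 b0 b1 b2 b3 : ℝ × ℝ → ℝ) (p : ℝ × ℝ) (A4 B4 : ℝ)
    (hW : ∀ p, W p = a3 p * b0 p ^ 4 + 12 * a2 p * b0 p ^ 3 * b1 p
      + 36 * a1 p * b0 p ^ 2 * b1 p ^ 2 + 12 * a1 p * b0 p ^ 3 * b2 p
      + 24 * a0 p * b0 p * b1 p ^ 3 + 36 * a0 p * b0 p ^ 2 * b1 p * b2 p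
      + 4 * a0 p * b0 p ^ 3 * b3 p)
    (ha0 : HasDerivAt (fun y => a0 (p.1, y)) (a1 p) p.2)
    (ha1 : HasDerivAt (fun y => a1 (p.1, y)) (a2 p) p.2)
    (ha2 : HasDerivAt (fun y => a2 (p.1, y)) (a3 p) p.2)
    (ha3 : HasDerivAt (fun y => a3 (p.1, y)) A4 p.2)
    (hb0 : HasDerivAt (fun y => b0 (p.1, y)) (b1 p) p.2)
    (hb1 : HasDerivAt (fun y => b1 (p.1, y)) (b2 p) p.2)
    (hb2 : HasDerivAt (fun y => b2 (p.1, y)) (b3 p) p.2)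
    (hb3 : HasDerivAt (fun y => b3 (p.1, y)) B4 p.2)
    (hb0val : b0 p = 0) :
    pY W p = 24 * a0 p * b1 p ^ 4 := by
  have h := ((((((ha3.mul (hb0.pow 4)).add
      (((ha2.const_mul (12 : ℝ)).mul (hb0.pow 3)).mul hb1)).add
      ((((ha1.const_mul (36 : ℝ)).mul (hb0.pow 2)).mul (hb1.pow 2)))).add
      (((ha1.const_mul (12 : ℝ)).mul (hb0.pow 3)).mul hb2)).add
      (((ha0.const_mul (24 : ℝ)).mul hb0).mul (hb1.pow 3))).add
      ((((ha0.const_mul (36 : ℝ)).mul (hb0.pow 2)).mul hb1).mul hb2)).add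
      ((((ha0.const_mul (4 : ℝ)).mul (hb0.pow 3)).mul hb3))
  have h' : HasDerivAt (fun y => W (p.1, y)) _ p.2 :=
    h.congr_of_eventuallyEq (Filter.Eventually.of_forall fun y => hW _)
  have hd : pY W p = _ := h'.deriv
  rw [hd]
  simp only [Prod.mk.eta, hb0val]
  norm_num
  simp only [hb0val]
  ring

lemma stepT0 (W a0 b0 : ℝ × ℝ → ℝ) (p : ℝ × ℝ) (A0 : ℝ)
    (hW : ∀ p, W p = a0 p * b0 p ^ 4)
    (ha0 : HasDerivAt (fun t => a0 (t, p.2)) A0 p.1)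
    (hb0 : HasDerivAt (fun t => b0 (t, p.2)) 0 p.1)
    (hb0val : b0 p = 0) :
    pT W p = 0 := by
  have h := ha0.mul (hb0.pow 4)
  have h' : HasDerivAt (fun t => W (t, p.2)) _ p.1 :=
    h.congr_of_eventuallyEq (Filter.Eventually.of_forall fun t => hW _)
  have hd : pT W p = _ := h'.deriv
  rw [hd]
  simp only [Prod.mk.eta, hb0val]
  norm_num
  simp [hb0val]

lemma stepT1 (W a0 a1 b0 b1 : ℝ × ℝ → ℝ) (p : ℝ × ℝ) (A0 A1 B1 : ℝ)
    (hW : ∀ p, W p = a1 p * b0 p ^ 4 + 4 * a0 p * b0 p ^ 3 * b1 p)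
    (ha0 : HasDerivAt (fun t => a0 (t, p.2)) A0 p.1)
    (ha1 : HasDerivAt (fun t => a1 (t, p.2)) A1 p.1)
    (hb0 : HasDerivAt (fun t => b0 (t, p.2)) 0 p.1)
    (hb1 : HasDerivAt (fun t => b1 (t, p.2)) B1 p.1)
    (hb0val : b0 p = 0) :
    pT W p = 0 := by
  have h := (ha1.mul (hb0.pow 4)).add
    (((ha0.const_mul (4 : ℝ)).mul (hb0.pow 3)).mul hb1)
  have h' : HasDerivAt (fun t => W (t, p.2)) _ p.1 :=
    h.congr_of_eventuallyEq (Filter.Eventually.of_forall fun t => hW _)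
  have hd : pT W p = _ := h'.deriv
  rw [hd]
  simp only [Prod.mk.eta, hb0val]
  norm_num
  simp [hb0val]

lemma stepT2 (W a0 a1 a2 b0 b1 b2 : ℝ × ℝ → ℝ) (p : ℝ × ℝ) (A0 A1 A2 B1 B2 : ℝ)
    (hW : ∀ p, W p = a2 p * b0 p ^ 4 + 8 * a1 p * b0 p ^ 3 * b1 p
      + 12 * a0 p * b0 p ^ 2 * b1 p ^ 2 + 4 * a0 p * b0 p ^ 3 * b2 p)
    (ha0 : HasDerivAt (fun t => a0 (t, p.2)) A0 p.1)
    (ha1 : HasDerivAt (fun t => a1 (t, p.2)) A1 p.1)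
    (ha2 : HasDerivAt (fun t => a2 (t, p.2)) A2 p.1)
    (hb0 : HasDerivAt (fun t => b0 (t, p.2)) 0 p.1)
    (hb1 : HasDerivAt (fun t => b1 (t, p.2)) B1 p.1)
    (hb2 : HasDerivAt (fun t => b2 (t, p.2)) B2 p.1)
    (hb0val : b0 p = 0) :
    pT W p = 0 := by
  have h := (((ha2.mul (hb0.pow 4)).add
      (((ha1.const_mul (8 : ℝ)).mul (hb0.pow 3)).mul hb1)).add
      ((((ha0.const_mul (12 : ℝ)).mul (hb0.pow 2)).mul (hb1.pow 2)))).add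
      (((ha0.const_mul (4 : ℝ)).mul (hb0.pow 3)).mul hb2)
  have h' : HasDerivAt (fun t => W (t, p.2)) _ p.1 :=
    h.congr_of_eventuallyEq (Filter.Eventually.of_forall fun t => hW _)
  have hd : pT W p = _ := h'.deriv
  rw [hd]
  simp only [Prod.mk.eta, hb0val]
  norm_num
  simp [hb0val]

lemma stepT3 (W a0 a1 a2 a3 b0 b1 b2 b3 : ℝ × ℝ → ℝ) (p : ℝ × ℝ)
    (A0 A1 A2 A3 B1 B2 B3 : ℝ)
    (hW : ∀ p, W p = a3 p * b0 p ^ 4 + 12 * a2 p * b0 p ^ 3 * b1 p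
      + 36 * a1 p * b0 p ^ 2 * b1 p ^ 2 + 12 * a1 p * b0 p ^ 3 * b2 p
      + 24 * a0 p * b0 p * b1 p ^ 3 + 36 * a0 p * b0 p ^ 2 * b1 p * b2 p
      + 4 * a0 p * b0 p ^ 3 * b3 p)
    (ha0 : HasDerivAt (fun t => a0 (t, p.2)) A0 p.1)
    (ha1 : HasDerivAt (fun t => a1 (t, p.2)) A1 p.1)
    (ha2 : HasDerivAt (fun t => a2 (t, p.2)) A2 p.1)
    (ha3 : HasDerivAt (fun t => a3 (t, p.2)) A3 p.1)
    (hb0 : HasDerivAt (fun t => b0 (t, p.2)) 0 p.1)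
    (hb1 : HasDerivAt (fun t => b1 (t, p.2)) B1 p.1)
    (hb2 : HasDerivAt (fun t => b2 (t, p.2)) B2 p.1)
    (hb3 : HasDerivAt (fun t => b3 (t, p.2)) B3 p.1)
    (hb0val : b0 p = 0) :
    pT W p = 0 := by
  have h := ((((((ha3.mul (hb0.pow 4)).add
      (((ha2.const_mul (12 : ℝ)).mul (hb0.pow 3)).mul hb1)).add
      ((((ha1.const_mul (36 : ℝ)).mul (hb0.pow 2)).mul (hb1.pow 2)))).add
      (((ha1.const_mul (12 : ℝ)).mul (hb0.pow 3)).mul hb2)).add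
      (((ha0.const_mul (24 : ℝ)).mul hb0).mul (hb1.pow 3))).add
      ((((ha0.const_mul (36 : ℝ)).mul (hb0.pow 2)).mul hb1).mul hb2)).add
      ((((ha0.const_mul (4 : ℝ)).mul (hb0.pow 3)).mul hb3))
  have h' : HasDerivAt (fun t => W (t, p.2)) _ p.1 :=
    h.congr_of_eventuallyEq (Filter.Eventually.of_forall fun t => hW _)
  have hd : pT W p = _ := h'.deriv
  rw [hd]
  simp only [Prod.mk.eta, hb0val]
  norm_num
  simp [hb0val]


noncomputable def bfun (v : ℝ × ℝ → ℝ) : ℝ × ℝ → ℝ := fun p => Real.cos (v p / 2)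

/-- At a singular point with `v = π`, the `Y`-derivatives of `x` up to order 4
vanish and `∂_Y⁵ x = (3/2) q v_Y⁴` (hence nonzero when `q ≠ 0` and `v_Y ≠ 0`);
if moreover `v_T = 0` then `∂_T ∂_Y^k x = 0` for `k = 1, 2, 3, 4`. -/
theorem novikov_typeII_x_derivatives
    (x v q : ℝ × ℝ → ℝ)
    (hx : ContDiff ℝ (⊤ : ℕ∞) x) (hv : ContDiff ℝ (⊤ : ℕ∞) v) (hq : ContDiff ℝ (⊤ : ℕ∞) q)
    (hrel : ∀ p : ℝ × ℝ, pY x p = q p * Real.cos (v p / 2) ^ 4)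
    (p₀ : ℝ × ℝ) (hsing : v p₀ = Real.pi) :
    (∀ k : ℕ, 1 ≤ k → k ≤ 4 → (pY^[k] x) p₀ = 0) ∧
      (pY^[5] x) p₀ = (3 / 2) * q p₀ * (pY v p₀) ^ 4 ∧
      (q p₀ ≠ 0 → pY v p₀ ≠ 0 → (pY^[5] x) p₀ ≠ 0) ∧
      (pT v p₀ = 0 → ∀ k : ℕ, 1 ≤ k → k ≤ 4 → pT (pY^[k] x) p₀ = 0) := by
  have hvd : Differentiable ℝ v := hv.differentiable (by simp)
  have hqd : Differentiable ℝ q := hq.differentiable (by simp)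
  have hB0c : ContDiff ℝ (⊤ : ℕ∞) (bfun v) := Real.contDiff_cos.comp (hv.div_const 2)
  have ha1c := contDiff_pY q hq
  have ha2c := contDiff_pY _ ha1c
  have ha3c := contDiff_pY _ ha2c
  have hb1c := contDiff_pY _ hB0c
  have hb2c := contDiff_pY _ hb1c
  have hb3c := contDiff_pY _ hb2c
  -- Y-slice derivative families
  have ha0 : ∀ p, HasDerivAt (fun y => q (p.1, y)) (pY q p) p.2 :=
    fun p => hasDerivAt_sliceY q hqd p
  have ha1 : ∀ p, HasDerivAt (fun y => pY q (p.1, y)) (pY (pY q) p) p.2 :=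
    fun p => hasDerivAt_sliceY _ (ha1c.differentiable (by simp)) p
  have ha2 : ∀ p, HasDerivAt (fun y => pY (pY q) (p.1, y)) (pY (pY (pY q)) p) p.2 :=
    fun p => hasDerivAt_sliceY _ (ha2c.differentiable (by simp)) p
  have hb0 : ∀ p, HasDerivAt (fun y => bfun v (p.1, y)) (pY (bfun v) p) p.2 :=
    fun p => hasDerivAt_sliceY _ (hB0c.differentiable (by simp)) p
  have hb1 : ∀ p, HasDerivAt (fun y => pY (bfun v) (p.1, y)) (pY (pY (bfun v)) p) p.2 :=
    fun p => hasDerivAt_sliceY _ (hb1c.differentiable (by simp)) p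
  have hb2 : ∀ p, HasDerivAt (fun y => pY (pY (bfun v)) (p.1, y)) (pY (pY (pY (bfun v))) p) p.2 :=
    fun p => hasDerivAt_sliceY _ (hb2c.differentiable (by simp)) p
  -- base relation
  have hW0 : ∀ p, pY x p = q p * bfun v p ^ 4 := hrel
  -- iterated identities
  have h1 := stepY1 (pY x) q (pY q) (bfun v) (pY (bfun v)) hW0 ha0 hb0
  have h2 := stepY2 (pY (pY x)) q (pY q) (pY (pY q)) (bfun v) (pY (bfun v))
    (pY (pY (bfun v))) h1 ha0 ha1 hb0 hb1
  have h3 := stepY3 (pY (pY (pY x))) q (pY q) (pY (pY q)) (pY (pY (pY q))) (bfun v)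
    (pY (bfun v)) (pY (pY (bfun v))) (pY (pY (pY (bfun v)))) h2 ha0 ha1 ha2 hb0 hb1 hb2
  -- values at the singular point
  have hb0val : bfun v p₀ = 0 := by
    show Real.cos (v p₀ / 2) = 0
    rw [hsing]; exact Real.cos_pi_div_two
  have hb1val : pY (bfun v) p₀ = -(pY v p₀) / 2 := by
    have hc := (Real.hasDerivAt_cos (v p₀ / 2)).comp p₀.2
      ((hasDerivAt_sliceY v hvd p₀).div_const 2)
    have hd : pY (bfun v) p₀ = -Real.sin (v p₀ / 2) * (pY v p₀ / 2) := hc.deriv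
    rw [hd, hsing, Real.sin_pi_div_two]; ring
  have h4 := stepY4at (pY (pY (pY (pY x)))) q (pY q) (pY (pY q)) (pY (pY (pY q))) (bfun v)
    (pY (bfun v)) (pY (pY (bfun v))) (pY (pY (pY (bfun v)))) p₀
    (pY (pY (pY (pY q))) p₀) (pY (pY (pY (pY (bfun v)))) p₀) h3
    (ha0 p₀) (ha1 p₀) (ha2 p₀) (hasDerivAt_sliceY _ (ha3c.differentiable (by simp)) p₀)
    (hb0 p₀) (hb1 p₀) (hb2 p₀) (hasDerivAt_sliceY _ (hb3c.differentiable (by simp)) p₀)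
    hb0val
  have e1 : pY^[1] x = pY x := rfl
  have e2 : pY^[2] x = pY (pY x) := rfl
  have e3 : pY^[3] x = pY (pY (pY x)) := rfl
  have e4 : pY^[4] x = pY (pY (pY (pY x))) := rfl
  have e5 : pY^[5] x = pY (pY (pY (pY (pY x)))) := rfl
  have hval5 : (pY^[5] x) p₀ = (3 / 2) * q p₀ * (pY v p₀) ^ 4 := by
    rw [e5]
    rw [h4, hb1val]
    ring
  refine ⟨?_, hval5, ?_, ?_⟩
  · intro k hk1 hk4
    interval_cases k
    · rw [e1, hrel p₀, hsing]
      simp [Real.cos_pi_div_two]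
    · rw [e2, h1 p₀, hb0val]; ring
    · rw [e3, h2 p₀, hb0val]; ring
    · rw [e4, h3 p₀, hb0val]; ring
  · intro hq0 hv1
    rw [hval5]
    exact mul_ne_zero (mul_ne_zero (by norm_num) hq0) (pow_ne_zero _ hv1)
  · intro hvT k hk1 hk4
    have haT0 := hasDerivAt_sliceT q hqd p₀
    have haT1 := hasDerivAt_sliceT (pY q) (ha1c.differentiable (by simp)) p₀
    have haT2 := hasDerivAt_sliceT (pY (pY q)) (ha2c.differentiable (by simp)) p₀
    have haT3 := hasDerivAt_sliceT (pY (pY (pY q))) (ha3c.differentiable (by simp)) p₀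
    have hbT1 := hasDerivAt_sliceT (pY (bfun v)) (hb1c.differentiable (by simp)) p₀
    have hbT2 := hasDerivAt_sliceT (pY (pY (bfun v))) (hb2c.differentiable (by simp)) p₀
    have hbT3 := hasDerivAt_sliceT (pY (pY (pY (bfun v)))) (hb3c.differentiable (by simp)) p₀
    have hbT0 : HasDerivAt (fun t => bfun v (t, p₀.2)) 0 p₀.1 := by
      have hc := (Real.hasDerivAt_cos (v p₀ / 2)).comp p₀.1
        ((hasDerivAt_sliceT v hvd p₀).div_const 2)
      have h0 : -Real.sin (v p₀ / 2) * (pT v p₀ / 2) = 0 := by rw [hvT]; ring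
      exact h0 ▸ hc
    interval_cases k
    · rw [e1]
      exact stepT0 (pY x) q (bfun v) p₀ (pT q p₀) hW0 haT0 hbT0 hb0val
    · rw [e2]
      exact stepT1 (pY (pY x)) q (pY q) (bfun v) (pY (bfun v)) p₀ _ _ _ h1
        haT0 haT1 hbT0 hbT1 hb0val
    · rw [e3]
      exact stepT2 (pY (pY (pY x))) q (pY q) (pY (pY q)) (bfun v) (pY (bfun v))
        (pY (pY (bfun v))) p₀ _ _ _ _ _ h2 haT0 haT1 haT2 hbT0 hbT1 hbT2 hb0val
    · rw [e4]
      exact stepT3 (pY (pY (pY (pY x)))) q (pY q) (pY (pY q)) (pY (pY (pY q))) (bfun v)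
        (pY (bfun v)) (pY (pY (bfun v))) (pY (pY (pY (bfun v)))) p₀ _ _ _ _ _ _ _ h3
        haT0 haT1 haT2 haT3 hbT0 hbT1 hbT2 hbT3 hb0val
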